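/- arXiv:2209.14453 — 2 statements merged into one kernel-verified Lean document; each statement's English description precedes it below -/
import Mathlib

section
/- Let L(z) = -∑_{i=1}^N [ (k_i/2)(2λ'_i + z)^{-1} + 2 d_i² (λ'_i)² (2λ'_i + z)^{-2} ] with distinct λ'_i > 0, positive integers k_i, and reals d_i ≥ 0. Then the data {(λ'_i, k_i, d_i)} is uniquely determined by the function L on any neighborhood of 0: if two such families give the same function L near 0, then the families are equal. -/
/-!
Multiplying by `∏ (2λ' + z)²` turns `L₁ - L₂` into a polynomial; it vanishes near `0`, hence
identically. At a pole `c`, every summand but the one at `c` is divisible by `(X - c)²`, while the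
summand at `c` is the numerator `a (X - c) + b` of the principal part times a cofactor coprime to
`(X - c)²`; so `(X - c)²` divides that linear numerator, forcing `a = b = 0`. Hence both families
have the same principal parts. Since `k > 0`, every `λ'` carries a nonzero simple-pole coefficient
`k / 2`, which matches the poles bijectively; `k` and `d² λ'²` are then read off the coefficients.
-/

open Real BigOperators

/-- The logarithmic derivative of the Gaussian generating function:
`L(z) = -∑_i [(k_i/2)(2λ'_i+z)⁻¹ + 2 d_i² λ'_i² (2λ'_i+z)⁻²]`. -/
noncomputable def Lfun {N : ℕ} (lam : Fin N → ℝ) (k : Fin N → ℕ)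
    (d : Fin N → ℝ) (z : ℝ) : ℝ :=
  -∑ i, ((k i : ℝ) / 2 * (2 * lam i + z)⁻¹ +
          2 * (d i)^2 * (lam i)^2 * ((2 * lam i + z)^2)⁻¹)

open Polynomial Finset

section PartialFractions

variable {K : Type*} [Field K]

lemma eq_zero_of_sq_X_sub_C_dvd_linear {a b c : K}
    (h : (X - C c) ^ 2 ∣ C a * (X - C c) + C b) : a = 0 ∧ b = 0 := by
  have hdeg : (C a * (X - C c) + C b).degree < ((X - C c) ^ 2).degree := by
    rw [degree_pow, degree_X_sub_C]
    compute_degree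
    all_goals norm_num
  have h0 := eq_zero_of_dvd_of_degree_lt h hdeg
  have hb : b = 0 := by simpa using congrArg (eval c) h0
  subst hb
  simpa [X_sub_C_ne_zero] using h0

variable [DecidableEq K]

noncomputable def partialFractionNumerator (S : Finset K) (a b : K → K) : K[X] :=
  ∑ c ∈ S, (C (a c) * (X - C c) + C (b c)) * ∏ c' ∈ S.erase c, (X - C c') ^ 2

lemma eval_partialFractionNumerator (S : Finset K) (a b : K → K) {z : K} (hz : z ∉ S) :
    (partialFractionNumerator S a b).eval z =
      (∏ c ∈ S, (z - c) ^ 2) * ∑ c ∈ S, (a c / (z - c) + b c / (z - c) ^ 2) := by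
  rw [partialFractionNumerator, eval_finsetSum, mul_sum]
  refine sum_congr rfl fun c hc => ?_
  have hzc : z - c ≠ 0 := sub_ne_zero.2 fun h => hz (h ▸ hc)
  rw [← mul_prod_erase S _ hc]
  simp only [eval_mul, eval_add, eval_prod, eval_pow, eval_sub, eval_C, eval_X]
  field_simp

theorem partialFraction_coeff_eq_zero (S : Finset K) (a b : K → K)
    (h : {z | ∑ c ∈ S, (a c / (z - c) + b c / (z - c) ^ 2) = 0}.Infinite) :
    ∀ c ∈ S, a c = 0 ∧ b c = 0 := by
  have hP : partialFractionNumerator S a b = 0 := by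
    refine eq_zero_of_infinite_isRoot _ ((h.sdiff S.finite_toSet).mono fun z hz => ?_)
    rw [Set.mem_ofPred_eq, IsRoot.def, eval_partialFractionNumerator S a b hz.2, hz.1, mul_zero]
  intro c hc
  have hcop : IsCoprime ((X - C c) ^ 2) (∏ c' ∈ S.erase c, (X - C c') ^ 2) :=
    IsCoprime.prod_right fun c' hc' => (isCoprime_X_sub_C_of_isUnit_sub
      (sub_ne_zero.2 (mem_erase.1 hc').1.symm).isUnit).pow
  have htotal : (X - C c) ^ 2 ∣ partialFractionNumerator S a b := hP ▸ dvd_zero _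
  rw [partialFractionNumerator, ← add_sum_erase S _ hc] at htotal
  refine eq_zero_of_sq_X_sub_C_dvd_linear (hcop.dvd_of_dvd_mul_right
    ((dvd_add_left (dvd_sum fun c' hc' => ?_)).1 htotal))
  exact (dvd_prod_of_mem _ (mem_erase.2 ⟨(mem_erase.1 hc').1.symm, hc⟩)).mul_left _

end PartialFractions

section Fibers

variable {ι ι' K : Type*} [Fintype ι] [Fintype ι'] [Field K] [DecidableEq K]

def fiberSum (p a : ι → K) (c : K) : K :=
  ∑ i with p i = c, a i

lemma fiberSum_eq_zero_of_notMem_range {p : ι → K} (a : ι → K) {c : K}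
    (hc : c ∉ Set.range p) : fiberSum p a c = 0 :=
  sum_eq_zero fun i hi => absurd ⟨i, (mem_filter.1 hi).2⟩ hc

lemma fiberSum_apply_of_injective {p : ι → K} (hp : Function.Injective p) (a : ι → K) (i : ι) :
    fiberSum p a (p i) = a i := by
  rw [fiberSum, sum_eq_single_of_mem i (by simp)]
  exact fun j hj hji => absurd (hp (mem_filter.1 hj).2) hji

lemma sum_partialFraction_eq_sum_fiberSum (p a b : ι → K) {S : Finset K} (hS : ∀ i, p i ∈ S)
    (z : K) :
    ∑ i, (a i / (z - p i) + b i / (z - p i) ^ 2) =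
      ∑ c ∈ S, (fiberSum p a c / (z - c) + fiberSum p b c / (z - c) ^ 2) := by
  rw [← sum_fiberwise_of_maps_to (fun i _ => hS i)]
  refine sum_congr rfl fun c _ => ?_
  rw [fiberSum, fiberSum, sum_div, sum_div, ← sum_add_distrib]
  exact sum_congr rfl fun i hi => by rw [(mem_filter.1 hi).2]

theorem fiberSum_eq_of_sum_partialFraction_eq (p a b : ι → K) (p' a' b' : ι' → K)
    (h : {z | ∑ i, (a i / (z - p i) + b i / (z - p i) ^ 2) =
      ∑ i, (a' i / (z - p' i) + b' i / (z - p' i) ^ 2)}.Infinite) (c : K) :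
    fiberSum p a c = fiberSum p' a' c ∧ fiberSum p b c = fiberSum p' b' c := by
  set S := univ.image p ∪ univ.image p'
  by_cases hc : c ∈ S
  swap
  · simp only [S, mem_union, mem_image, mem_univ, true_and, not_or] at hc
    simp [fiberSum_eq_zero_of_notMem_range, hc]
  have hmem : ∀ i, p i ∈ S := fun i => mem_union_left _ (mem_image_of_mem _ (mem_univ i))
  have hmem' : ∀ i, p' i ∈ S := fun i => mem_union_right _ (mem_image_of_mem _ (mem_univ i))
  have key := partialFraction_coeff_eq_zero S (fiberSum p a - fiberSum p' a')
    (fiberSum p b - fiberSum p' b') (h.mono fun z hz => ?_) c hc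
  · simpa only [Pi.sub_apply, sub_eq_zero] using key
  · rw [Set.mem_ofPred_eq, sum_partialFraction_eq_sum_fiberSum _ _ _ hmem,
      sum_partialFraction_eq_sum_fiberSum _ _ _ hmem', ← sub_eq_zero, ← sum_sub_distrib] at hz
    refine (sum_congr rfl fun c _ => ?_).trans hz
    simp only [Pi.sub_apply]
    ring

lemma range_subset_of_fiberSum_eq {p a : ι → K} {p' a' : ι' → K} (hp : Function.Injective p)
    (ha : ∀ i, a i ≠ 0) (h : ∀ c, fiberSum p a c = fiberSum p' a' c) :
    Set.range p ⊆ Set.range p' := by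
  rintro _ ⟨i, rfl⟩
  by_contra hi
  exact ha i <| by
    rw [← fiberSum_apply_of_injective hp a i, h, fiberSum_eq_zero_of_notMem_range _ hi]

theorem exists_equiv_of_fiberSum_eq {p a b : ι → K} {p' a' b' : ι' → K}
    (hp : Function.Injective p) (hp' : Function.Injective p') (ha : ∀ i, a i ≠ 0)
    (ha' : ∀ i, a' i ≠ 0) (hfa : ∀ c, fiberSum p a c = fiberSum p' a' c)
    (hfb : ∀ c, fiberSum p b c = fiberSum p' b' c) :
    ∃ σ : ι ≃ ι', ∀ i, p' (σ i) = p i ∧ a' (σ i) = a i ∧ b' (σ i) = b i := by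
  have hrange : Set.range p = Set.range p' :=
    (range_subset_of_fiberSum_eq hp ha hfa).antisymm
      (range_subset_of_fiberSum_eq hp' ha' fun c => (hfa c).symm)
  let σ : ι ≃ ι' := (Equiv.ofInjective p hp).trans
    ((Equiv.setCongr hrange).trans (Equiv.ofInjective p' hp').symm)
  have hσ : ∀ i, p' (σ i) = p i := fun i => Equiv.apply_ofInjective_symm hp' _
  refine ⟨σ, fun i => ⟨hσ i, ?_, ?_⟩⟩
  · rw [← fiberSum_apply_of_injective hp' a' (σ i), hσ, ← hfa, fiberSum_apply_of_injective hp]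
  · rw [← fiberSum_apply_of_injective hp' b' (σ i), hσ, ← hfb, fiberSum_apply_of_injective hp]

end Fibers

lemma Lfun_eq_neg_sum_partialFraction {N : ℕ} (lam : Fin N → ℝ) (k : Fin N → ℕ) (d : Fin N → ℝ)
    (z : ℝ) :
    Lfun lam k d z = -∑ i, ((k i : ℝ) / 2 / (z - -(2 * lam i)) +
      2 * d i ^ 2 * lam i ^ 2 / (z - -(2 * lam i)) ^ 2) := by
  simp only [Lfun, sub_neg_eq_add, div_eq_mul_inv, add_comm z]

theorem normal_params_determined_by_L_general (N₁ N₂ : ℕ)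
    (lam₁ : Fin N₁ → ℝ) (k₁ : Fin N₁ → ℕ) (d₁ : Fin N₁ → ℝ)
    (lam₂ : Fin N₂ → ℝ) (k₂ : Fin N₂ → ℕ) (d₂ : Fin N₂ → ℝ)
    (hlam₁ : ∀ i, 0 < lam₁ i)
    (hinj₁ : Function.Injective lam₁) (hinj₂ : Function.Injective lam₂)
    (hk₁ : ∀ i, 0 < k₁ i) (hk₂ : ∀ i, 0 < k₂ i)
    (hd₁ : ∀ i, 0 ≤ d₁ i) (hd₂ : ∀ i, 0 ≤ d₂ i)
    (ε : ℝ) (hε : 0 < ε)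
    (heq : ∀ z : ℝ, |z| < ε → Lfun lam₁ k₁ d₁ z = Lfun lam₂ k₂ d₂ z) :
    ∃ σ : Fin N₁ ≃ Fin N₂, ∀ i,
      lam₂ (σ i) = lam₁ i ∧ k₂ (σ i) = k₁ i ∧ d₂ (σ i) = d₁ i := by
  have hpole : Function.Injective fun x : ℝ => -(2 * x) :=
    neg_injective.comp (mul_right_injective₀ two_ne_zero)
  have hfib := fiberSum_eq_of_sum_partialFraction_eq
    (fun i => -(2 * lam₁ i)) (fun i => (k₁ i : ℝ) / 2) (fun i => 2 * d₁ i ^ 2 * lam₁ i ^ 2)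
    (fun i => -(2 * lam₂ i)) (fun i => (k₂ i : ℝ) / 2) (fun i => 2 * d₂ i ^ 2 * lam₂ i ^ 2)
    ((Set.Ioo_infinite (neg_lt_self hε)).mono fun z hz => by
      simpa only [Set.mem_ofPred_eq, Lfun_eq_neg_sum_partialFraction, neg_inj]
        using heq z (abs_lt.2 hz))
  obtain ⟨σ, hσ⟩ := exists_equiv_of_fiberSum_eq (hpole.comp hinj₁) (hpole.comp hinj₂)
    (fun i => div_ne_zero (Nat.cast_ne_zero.2 (hk₁ i).ne') two_ne_zero)
    (fun i => div_ne_zero (Nat.cast_ne_zero.2 (hk₂ i).ne') two_ne_zero)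
    (fun c => (hfib c).1) (fun c => (hfib c).2)
  refine ⟨σ, fun i => ?_⟩
  obtain ⟨hpole_eq, hk, hb⟩ := hσ i
  have hlam : lam₂ (σ i) = lam₁ i := hpole hpole_eq
  refine ⟨hlam, by simpa using hk, ?_⟩
  rw [hlam] at hb
  have hsq : d₂ (σ i) ^ 2 = d₁ i ^ 2 :=
    mul_left_cancel₀ two_ne_zero (mul_right_cancel₀ (pow_ne_zero 2 (hlam₁ i).ne') hb)
  exact (pow_left_inj₀ (hd₂ _) (hd₁ i) two_ne_zero).1 hsq

/-- the family `{(λ'_i, k_i, d_i)}` (distinct `λ'_i > 0`,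
`k_i` positive integers, `d_i ≥ 0`) is uniquely determined by the function
`L` on any neighborhood of `0`. -/
theorem normal_params_determined_by_L (N₁ N₂ : ℕ)
    (lam₁ : Fin N₁ → ℝ) (k₁ : Fin N₁ → ℕ) (d₁ : Fin N₁ → ℝ)
    (lam₂ : Fin N₂ → ℝ) (k₂ : Fin N₂ → ℕ) (d₂ : Fin N₂ → ℝ)
    (hlam₁ : ∀ i, 0 < lam₁ i) (hlam₂ : ∀ i, 0 < lam₂ i)
    (hinj₁ : Function.Injective lam₁) (hinj₂ : Function.Injective lam₂)
    (hk₁ : ∀ i, 0 < k₁ i) (hk₂ : ∀ i, 0 < k₂ i)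
    (hd₁ : ∀ i, 0 ≤ d₁ i) (hd₂ : ∀ i, 0 ≤ d₂ i)
    (ε : ℝ) (hε : 0 < ε)
    (heq : ∀ z : ℝ, |z| < ε → Lfun lam₁ k₁ d₁ z = Lfun lam₂ k₂ d₂ z) :
    ∃ σ : Fin N₁ ≃ Fin N₂, ∀ i,
      lam₂ (σ i) = lam₁ i ∧ k₂ (σ i) = k₁ i ∧ d₂ (σ i) = d₁ i :=
  normal_params_determined_by_L_general N₁ N₂ lam₁ k₁ d₁ lam₂ k₂ d₂ hlam₁ hinj₁ hinj₂ hk₁ hk₂ hd₁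
    hd₂ ε hε heq
end

section
/- Let Γ = AᵀA with A symplectic. Then det(Γ) = 1. Conversely, if Γ = AᵀTA with A symplectic, T diagonal with paired diagonal entries ν_i ≥ 1, and det(Γ) = 1, then T = I. -/
/-!
Since `J Jᵀ = 1`, taking determinants in `Aᵀ J A = J` gives `det A ^ 2 = 1`. Hence
`det (Aᵀ T A) = det T`, which is the product of the diagonal entries of `T`; these are all `≥ 1`,
so the product equals `1` only if every entry equals `1`.
-/

open Matrix MeasureTheory Real BigOperators

/-- The standard symplectic form on `2*S` coordinates: block diagonal with
blocks `[[0,1],[-1,0]]`. -/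
noncomputable def Jmat (S : ℕ) : Matrix (Fin (2*S)) (Fin (2*S)) ℝ :=
  Matrix.of fun i j =>
    if i.val % 2 = 0 ∧ j.val = i.val + 1 then 1
    else if j.val % 2 = 0 ∧ i.val = j.val + 1 then -1 else 0

/-- A real `2S × 2S` matrix is symplectic if `Aᵀ J A = J`. -/
def IsSymplectic {S : ℕ} (A : Matrix (Fin (2*S)) (Fin (2*S)) ℝ) : Prop :=
  Aᵀ * Jmat S * A = Jmat S

/-- The thermal diagonal matrix `diag (ν₁, ν₁, …, ν_S, ν_S)`. -/
noncomputable def thermal {S : ℕ} (ν : Fin S → ℝ) :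
    Matrix (Fin (2*S)) (Fin (2*S)) ℝ :=
  Matrix.diagonal fun i => ν ⟨i.val / 2, by omega⟩

theorem Finset.eq_one_of_prod_eq_one_of_one_le {ι R : Type*} [CommMonoidWithZero R]
    [PartialOrder R] [ZeroLEOneClass R] [PosMulMono R] {f : ι → R} {s : Finset ι}
    (hf : ∀ i ∈ s, 1 ≤ f i) (h : ∏ i ∈ s, f i = 1) {i : ι} (hi : i ∈ s) : f i = 1 := by
  refine le_antisymm ?_ (hf i hi)
  have hle := prod_le_prod_of_subset_of_one_le (singleton_subset_iff.2 hi)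
    (by simpa using zero_le_one.trans (hf i hi)) fun j hj _ => hf j hj
  rwa [prod_singleton, h] at hle

lemma Jmat_mul_transpose (S : ℕ) : Jmat S * (Jmat S)ᵀ = 1 := by
  ext i j
  -- the only nonzero entry of row `i`, a `±1`, sits in column `p`
  let p : Fin (2 * S) :=
    ⟨if i.val % 2 = 0 then i.val + 1 else i.val - 1, by split_ifs <;> omega⟩
  rw [mul_apply, Finset.sum_eq_single p]
  · simp only [transpose_apply, Jmat, of_apply, one_apply, p, Fin.ext_iff]
    split_ifs <;> first | omega | norm_num
  · intro k _ hk
    refine mul_eq_zero_of_left ?_ _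
    simp only [Jmat, of_apply, p, ne_eq, Fin.ext_iff] at hk ⊢
    split_ifs at hk ⊢ <;> first | omega | rfl
  · simp

lemma Jmat_det_ne_zero (S : ℕ) : (Jmat S).det ≠ 0 :=
  isUnit_iff_ne_zero.mp (isUnit_det_of_right_inverse (Jmat_mul_transpose S))

lemma IsSymplectic.det_sq {S : ℕ} {A : Matrix (Fin (2*S)) (Fin (2*S)) ℝ}
    (hA : IsSymplectic A) : A.det ^ 2 = 1 := by
  have h := congrArg det hA
  rw [det_mul, det_mul, det_transpose] at h
  exact mul_left_cancel₀ (Jmat_det_ne_zero S) (by linear_combination h)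

lemma thermal_eq_one_of_det_eq_one {S : ℕ} {ν : Fin S → ℝ} (hν : ∀ i, 1 ≤ ν i)
    (h : (thermal ν).det = 1) : thermal ν = 1 := by
  rw [thermal, det_diagonal] at h
  rw [thermal, ← diagonal_one]
  congr 1
  funext i
  exact Finset.eq_one_of_prod_eq_one_of_one_le (fun j _ => hν _) h (Finset.mem_univ i)

/-- for `A` symplectic, `det(Aᵀ A) = 1`; conversely, if
`Γ = Aᵀ T A` with `T` thermal diagonal with `ν_i ≥ 1` and `det Γ = 1`,
then `T = I`. -/
theorem pure_det_one_and_converse (S : ℕ)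
    (A : Matrix (Fin (2*S)) (Fin (2*S)) ℝ) (hA : IsSymplectic A)
    (ν : Fin S → ℝ) (hν : ∀ i, 1 ≤ ν i) :
    (Aᵀ * A).det = 1 ∧
      ((Aᵀ * thermal ν * A).det = 1 → thermal ν = 1) := by
  have hA2 := hA.det_sq
  refine ⟨by rw [det_mul, det_transpose, ← sq, hA2], fun h => thermal_eq_one_of_det_eq_one hν ?_⟩
  rw [det_mul, det_mul, det_transpose] at h
  linear_combination h - (thermal ν).det * hA2
end
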